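/- arXiv:1502.03286 — 5 statements merged into one kernel-verified Lean document; each statement's English description precedes it below -/
import Mathlib

section
/- Recursive formula for the information complexity: for s ≥ 2 and ε ∈ (0,1) with x(ε) = (log ε^{-2})/(log ω^{-1}), one has n(ε, APP_s) = Σ_{k=0}^{⌈(x(ε)/a_s)^{1/b_s}⌉ - 1} m_k · n(ε·ω^{-a_s k^{b_s}/2}, APP_{s-1}). -/
open scoped ENNReal

/-- `x(ε) = log ε⁻² / log ω⁻¹`. -/
noncomputable def X (ω ε : ℝ) : ℝ := Real.log (ε⁻¹ ^ 2) / Real.log ω⁻¹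

open Classical in
/-- The information complexity `n(ε, APP_s)`: the weighted count
`∑_{k ∈ ℕ₀^s, ∑_j a_j k_j^{b_j} < x(ε)} m_{k_1} ⋯ m_{k_s}` (valued in `ℝ≥0∞`). -/
noncomputable def nInfo (ω : ℝ) (a b : ℕ → ℝ) (m : ℕ → ℕ) (s : ℕ) (ε : ℝ) : ℝ≥0∞ :=
  ∑' k : Fin s → ℕ,
    if (∑ j : Fin s, a j * ((k j : ℝ) ^ (b j))) < X ω ε then
      ∏ j : Fin s, (m (k j) : ℝ≥0∞) else 0

/-!
Splitting off the last coordinate writes the `s`-dimensional count as a series over `k_s` of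
`m_{k_s}` times an `(s-1)`-dimensional count with threshold `x(ε) - a_s k_s^{b_s}`, and this
threshold is `x(ε ω^{-a_s k_s^{b_s}/2})`. Since all `a_j` are positive, the terms with
`a_s k_s^{b_s} ≥ x(ε)` vanish, which is exactly `k_s ≥ ⌈(x(ε)/a_s)^{1/b_s}⌉`.
-/

open Classical in
noncomputable def weightedLatticeCount (a b : ℕ → ℝ) (m : ℕ → ℕ) (s : ℕ) (t : ℝ) : ℝ≥0∞ :=
  ∑' k : Fin s → ℕ,
    if (∑ j : Fin s, a j * ((k j : ℝ) ^ (b j))) < t then ∏ j : Fin s, (m (k j) : ℝ≥0∞) else 0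

theorem nInfo_eq_weightedLatticeCount (ω : ℝ) (a b : ℕ → ℝ) (m : ℕ → ℕ) (s : ℕ) (ε : ℝ) :
    nInfo ω a b m s ε = weightedLatticeCount a b m s (X ω ε) :=
  rfl

theorem X_mul_rpow {ω ε : ℝ} (hω0 : 0 < ω) (hω1 : ω ≠ 1) (hε : ε ≠ 0) (c : ℝ) :
    X ω (ε * ω ^ (-c / 2)) = X ω ε - c := by
  have hlog : Real.log ω ≠ 0 := Real.log_ne_zero_of_pos_of_ne_one hω0 hω1
  have hpow : ω ^ (-c / 2) ≠ 0 := (Real.rpow_pos_of_pos hω0 _).ne'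
  unfold X
  rw [mul_inv, Real.log_pow, Real.log_pow, Real.log_mul (inv_ne_zero hε) (inv_ne_zero hpow),
    Real.log_inv, Real.log_inv, Real.log_rpow hω0, Real.log_inv]
  field_simp
  ring

section weightedLatticeCount

variable (a b : ℕ → ℝ) (m : ℕ → ℕ)

theorem weightedLatticeCount_succ (n : ℕ) (t : ℝ) :
    weightedLatticeCount a b m (n + 1) t
      = ∑' k : ℕ, (m k : ℝ≥0∞) * weightedLatticeCount a b m n (t - a n * (k : ℝ) ^ b n) := by
  classical
  unfold weightedLatticeCount
  rw [← (Fin.snocEquiv fun _ => ℕ).tsum_eq, ENNReal.tsum_prod']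
  refine tsum_congr fun k => ?_
  rw [← ENNReal.tsum_mul_left]
  refine tsum_congr fun v => ?_
  simp only [Fin.snocEquiv, Equiv.coe_fn_mk, Fin.sum_univ_castSucc, Fin.prod_univ_castSucc,
    Fin.snoc_castSucc, Fin.snoc_last, Fin.val_castSucc, Fin.val_last, lt_sub_iff_add_lt]
  split_ifs <;> simp [mul_comm]

variable {a b m}

theorem weightedLatticeCount_eq_zero {n : ℕ} {t : ℝ} (ha : ∀ j, 0 ≤ a j) (ht : t ≤ 0) :
    weightedLatticeCount a b m n t = 0 := by
  refine ENNReal.tsum_eq_zero.mpr fun k => if_neg (not_lt.mpr ?_)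
  exact ht.trans <| Finset.sum_nonneg fun j _ =>
    mul_nonneg (ha j) (Real.rpow_nonneg (Nat.cast_nonneg _) _)

theorem le_mul_rpow_of_ceil_le {α β t : ℝ} {k : ℕ} (hα : 0 < α) (hβ : 0 < β)
    (hk : ⌈(t / α) ^ (1 / β)⌉₊ ≤ k) : t ≤ α * (k : ℝ) ^ β := by
  rcases le_or_gt t 0 with ht | ht
  · exact ht.trans (by positivity)
  have htα : 0 ≤ t / α := (div_pos ht hα).le
  have h := Real.rpow_le_rpow (Real.rpow_nonneg htα _) (Nat.ceil_le.mp hk) hβ.le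
  rw [← Real.rpow_mul htα, one_div_mul_cancel hβ.ne', Real.rpow_one, div_le_iff₀ hα] at h
  linarith

theorem weightedLatticeCount_succ_eq_sum {n : ℕ} {t : ℝ} (ha : ∀ j, 0 ≤ a j) (han : 0 < a n)
    (hbn : 0 < b n) :
    weightedLatticeCount a b m (n + 1) t
      = ∑ k ∈ Finset.range ⌈(t / a n) ^ ((1 : ℝ) / b n)⌉₊,
          (m k : ℝ≥0∞) * weightedLatticeCount a b m n (t - a n * (k : ℝ) ^ b n) := by
  rw [weightedLatticeCount_succ]
  refine tsum_eq_sum fun k hk => ?_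
  have hkt := le_mul_rpow_of_ceil_le han hbn (not_lt.mp (mt Finset.mem_range.mpr hk))
  rw [weightedLatticeCount_eq_zero ha (sub_nonpos.mpr hkt), mul_zero]

end weightedLatticeCount

theorem stmt7_general (ω : ℝ) (hω : ω ∈ Set.Ioo (0:ℝ) 1)
    (a b : ℕ → ℝ) (ha : ∀ j, 0 < a j) (hb : ∀ j, 0 < b j)
    (m : ℕ → ℕ)
    (s : ℕ) (hs : 2 ≤ s) (ε : ℝ) (hε : ε ∈ Set.Ioo (0:ℝ) 1) :
    nInfo ω a b m s ε
      = ∑ k ∈ Finset.range ⌈(X ω ε / a (s - 1)) ^ ((1 : ℝ) / b (s - 1))⌉₊,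
          (m k : ℝ≥0∞) *
            nInfo ω a b m (s - 1) (ε * ω ^ (-(a (s - 1) * (k : ℝ) ^ (b (s - 1))) / 2)) := by
  obtain ⟨n, rfl⟩ : ∃ n, s = n + 1 := ⟨s - 1, by omega⟩
  simp only [Nat.add_sub_cancel, nInfo_eq_weightedLatticeCount,
    X_mul_rpow hω.1 hω.2.ne hε.1.ne']
  exact weightedLatticeCount_succ_eq_sum (fun j => (ha j).le) (ha n) (hb n)

/-- Recursive formula: for `s ≥ 2` and `ε ∈ (0,1)`,
`n(ε, APP_s) = ∑_{k=0}^{⌈(x(ε)/a_s)^{1/b_s}⌉ - 1} m_k · n(ε ω^{-a_s k^{b_s}/2}, APP_{s-1})`. -/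
theorem stmt7 (ω : ℝ) (hω : ω ∈ Set.Ioo (0:ℝ) 1)
    (a b : ℕ → ℝ) (ha : ∀ j, 0 < a j) (hamono : Monotone a) (hb : ∀ j, 0 < b j)
    (m : ℕ → ℕ) (hm : ∀ k, 1 ≤ m k) (hmbd : ∃ M, ∀ k, m k ≤ M)
    (s : ℕ) (hs : 2 ≤ s) (ε : ℝ) (hε : ε ∈ Set.Ioo (0:ℝ) 1) :
    nInfo ω a b m s ε
      = ∑ k ∈ Finset.range ⌈(X ω ε / a (s - 1)) ^ ((1 : ℝ) / b (s - 1))⌉₊,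
          (m k : ℝ≥0∞) *
            nInfo ω a b m (s - 1) (ε * ω ^ (-(a (s - 1) * (k : ℝ) ^ (b (s - 1))) / 2)) :=
  stmt7_general ω hω a b ha hb m s hs ε hε
end

section
/- Upper bound on information complexity: for ε∈(0,1) with x(ε) > a_1, n(ε, APP_s) ≤ m_0^s · Π_{j=1}^{min(s, j(ε))} (1 + (m_max/m_0)(⌈(x(ε)/a_j)^{1/b_j}⌉ - 1)), where j(ε) = sup{ j ∈ ℕ : x(ε) > a_j } and m_max = max_{k≥1} m_k. -/
open scoped ENNReal

/-- `min(s, j(ε))` where `j(ε) = sup{j : x(ε) > a_j}`; since `a` is nondecreasing,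
`j(ε)` equals the (extended) number of indices `j` with `a_j < x(ε)`. -/
noncomputable def jMin (ω : ℝ) (a : ℕ → ℝ) (s : ℕ) (ε : ℝ) : ℕ :=
  ((min (s : ℕ∞) (Set.encard {j : ℕ | a j < X ω ε}))).toNat

/-!
Since all terms `a_j k_j^{b_j}` are nonnegative, the condition `∑_j a_j k_j^{b_j} < x` implies
`a_j k_j^{b_j} < x` for every `j`, so `n(ε, APP_s)` is at most a product over the coordinates of
one-dimensional sums. In coordinate `j` only the indices `k < N_j := ⌈(x/a_j)^{1/b_j}⌉` survive;
`k = 0` contributes `m_0` and each of the other `N_j - 1` at most `m_max`. Finally, `a` being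
nondecreasing, `N_j = 1` as soon as `j ≥ j(ε)`, so those coordinates contribute only `m_0`.
-/

open Finset

theorem ENNReal.tsum_fin_pi_prod {β : Type*} :
    ∀ {s : ℕ} (g : Fin s → β → ℝ≥0∞), ∑' k : Fin s → β, ∏ j, g j (k j) = ∏ j, ∑' n, g j n
  | 0, g => by simp [tsum_fintype]
  | s + 1, g => by
    rw [← (Fin.consEquiv fun _ : Fin (s + 1) => β).tsum_eq]
    simp only [Fin.consEquiv, Equiv.coe_fn_mk, Fin.prod_univ_succ, Fin.cons_zero, Fin.cons_succ]
    rw [ENNReal.tsum_prod']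
    simp only [ENNReal.tsum_mul_left, ENNReal.tsum_mul_right,
      ENNReal.tsum_fin_pi_prod fun j : Fin s => g j.succ]

theorem ite_sum_lt_le_prod_ite {ι : Type*} [Fintype ι] {u : ι → ℝ} (hu : ∀ i, 0 ≤ u i)
    (x : ℝ) (v : ι → ℝ≥0∞) :
    (if ∑ i, u i < x then ∏ i, v i else 0) ≤ ∏ i, if u i < x then v i else 0 := by
  split_ifs with h
  · refine prod_le_prod' fun i _ => ?_
    rw [if_pos ((single_le_sum (fun i _ => hu i) (mem_univ i)).trans_lt h)]
  · exact zero_le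

theorem lt_ceil_rpow_one_div_of_mul_rpow_lt {c b x : ℝ} (hc : 0 < c) (hb : 0 < b) {k : ℕ}
    (h : c * (k : ℝ) ^ b < x) : k < ⌈(x / c) ^ (1 / b)⌉₊ := by
  have hx : 0 < x := (mul_nonneg hc.le (Real.rpow_nonneg k.cast_nonneg b)).trans_lt h
  refine Nat.lt_ceil.2 ?_
  rwa [one_div, Real.lt_rpow_inv_iff_of_pos k.cast_nonneg (div_pos hx hc).le hb, lt_div_iff₀ hc,
    mul_comm]

theorem ceil_rpow_le_one {c b x : ℝ} (hx : 0 ≤ x) (hxc : x ≤ c) (hb : 0 ≤ b) :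
    ⌈(x / c) ^ (1 / b)⌉₊ ≤ 1 :=
  Nat.ceil_le.2 <| Nat.cast_one (R := ℝ) ▸ Real.rpow_le_one (div_nonneg hx (hx.trans hxc))
    (div_le_one_of_le₀ hxc (hx.trans hxc)) (one_div_nonneg.2 hb)

theorem sum_range_le_add_mul {f : ℕ → ℝ≥0∞} {M : ℝ≥0∞} (hf : ∀ k, 1 ≤ k → f k ≤ M) :
    ∀ N : ℕ, ∑ k ∈ range N, f k ≤ f 0 + M * ((N - 1 : ℕ) : ℝ≥0∞)
  | 0 => by simp
  | N + 1 => by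
    rw [sum_range_succ', add_comm, Nat.add_sub_cancel, mul_comm, ← nsmul_eq_mul]
    gcongr
    simpa using sum_le_card_nsmul (range N) _ M fun k _ => hf (k + 1) k.succ_pos

theorem tsum_ite_mul_rpow_lt_le {c b x : ℝ} (hc : 0 < c) (hb : 0 < b) {m : ℕ → ℕ} {mmax : ℕ}
    (hmmax : ∀ k, 1 ≤ k → m k ≤ mmax) :
    ∑' k : ℕ, (if c * (k : ℝ) ^ b < x then (m k : ℝ≥0∞) else 0)
      ≤ m 0 + mmax * ((⌈(x / c) ^ (1 / b)⌉₊ - 1 : ℕ) : ℝ≥0∞) := by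
  rw [tsum_eq_sum (s := range ⌈(x / c) ^ (1 / b)⌉₊) fun k hk => if_neg fun h =>
    hk (mem_range.2 (lt_ceil_rpow_one_div_of_mul_rpow_lt hc hb h))]
  refine (sum_range_le_add_mul (M := mmax) (fun k hk => ?_) _).trans ?_
  · split_ifs
    · exact_mod_cast hmmax k hk
    · exact zero_le
  · gcongr
    split_ifs
    · exact le_rfl
    · exact zero_le

theorem notMem_of_toNat_min_encard_le {T : Set ℕ} (hT : IsLowerSet T) {s j : ℕ} (hjs : j < s)
    (hj : (min (s : ℕ∞) T.encard).toNat ≤ j) : j ∉ T := by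
  intro hjT
  have hcard : ((j + 1 : ℕ) : ℕ∞) ≤ T.encard := by
    rw [← card_range (j + 1), ← Set.encard_coe_eq_coe_finsetCard]
    exact Set.encard_le_encard fun i hi => hT (Nat.lt_succ_iff.1 (mem_range.1 hi)) hjT
  have hle := ENat.toNat_le_toNat (le_min (Nat.cast_le.2 hjs) hcard)
    (ne_top_of_le_ne_top (ENat.natCast_ne_top s) (min_le_left _ _))
  simp only [ENat.toNat_natCast] at hle
  omega

theorem ENNReal.add_mul_eq_mul_one_add_div_mul {p q r : ℝ≥0∞} (hp0 : p ≠ 0) (hp : p ≠ ⊤) :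
    p + q * r = p * (1 + q / p * r) := by
  rw [mul_add, mul_one, ← mul_assoc, ENNReal.mul_div_cancel hp0 hp]

theorem stmt10_general (ω : ℝ)
    (a b : ℕ → ℝ) (ha : ∀ j, 0 < a j) (hamono : Monotone a) (hb : ∀ j, 0 < b j)
    (m : ℕ → ℕ) (hm : ∀ k, 1 ≤ m k)
    (mmax : ℕ) (hmmax : ∀ k, 1 ≤ k → m k ≤ mmax)
    (s : ℕ) (ε : ℝ) (hx : a 0 < X ω ε) :
    nInfo ω a b m s ε ≤
      (m 0 : ℝ≥0∞) ^ s *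
        ∏ j ∈ Finset.range (jMin ω a s ε),
          (1 + (mmax : ℝ≥0∞) / (m 0 : ℝ≥0∞) *
            ((⌈(X ω ε / a j) ^ ((1 : ℝ) / b j)⌉₊ : ℝ≥0∞) - 1)) := by
  set x := X ω ε
  set N : ℕ → ℕ := fun j => ⌈(x / a j) ^ ((1 : ℝ) / b j)⌉₊
  have hm0 : (m 0 : ℝ≥0∞) ≠ 0 := Nat.cast_ne_zero.2 (Nat.pos_iff_ne_zero.1 (hm 0))
  have hJs : jMin ω a s ε ≤ s := ENat.toNat_le_of_le_natCast (min_le_left _ _)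
  have hN : ∀ j < s, jMin ω a s ε ≤ j → N j ≤ 1 := fun j hjs hJj =>
    ceil_rpow_le_one ((ha 0).trans hx).le (not_lt.1 (notMem_of_toNat_min_encard_le
      ((isLowerSet_Iio x).preimage hamono) hjs hJj)) (hb j).le
  calc nInfo ω a b m s ε
      ≤ ∏ j : Fin s, ∑' k : ℕ, if a j * (k : ℝ) ^ b j < x then (m k : ℝ≥0∞) else 0 := by
        rw [← ENNReal.tsum_fin_pi_prod]
        exact ENNReal.tsum_le_tsum fun k => ite_sum_lt_le_prod_ite
          (fun j : Fin s => mul_nonneg (ha j).le (Real.rpow_nonneg (k j).cast_nonneg _)) x _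
    _ ≤ ∏ j : Fin s, ((m 0 : ℝ≥0∞) + mmax * ((N j - 1 : ℕ) : ℝ≥0∞)) :=
        prod_le_prod' fun j _ => tsum_ite_mul_rpow_lt_le (ha j) (hb j) hmmax
    _ = (m 0 : ℝ≥0∞) ^ s * ∏ j ∈ range s, (1 + mmax / m 0 * ((N j : ℝ≥0∞) - 1)) := by
        simp_rw [ENNReal.natCast_sub, Nat.cast_one,
          ENNReal.add_mul_eq_mul_one_add_div_mul hm0 (ENNReal.natCast_ne_top _),
          prod_mul_distrib, prod_const, card_univ, Fintype.card_fin]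
        rw [Fin.prod_univ_eq_prod_range (fun j => 1 + mmax / m 0 * ((N j : ℝ≥0∞) - 1))]
    _ = _ := by
        refine congrArg _ (prod_subset (range_subset_range.2 hJs) fun j hjs hjJ => ?_).symm
        have hNj := hN j (mem_range.1 hjs) (not_lt.1 fun h => hjJ (mem_range.2 h))
        rw [tsub_eq_zero_of_le (Nat.cast_le_one.2 hNj), mul_zero, add_zero]

/-- Upper bound: for `ε ∈ (0,1)` with `x(ε) > a_1`,
`n(ε,APP_s) ≤ m_0^s ∏_{j=1}^{min(s,j(ε))} (1 + (m_max/m_0)(⌈(x(ε)/a_j)^{1/b_j}⌉ - 1))`. -/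
theorem stmt10 (ω : ℝ) (hω : ω ∈ Set.Ioo (0:ℝ) 1)
    (a b : ℕ → ℝ) (ha : ∀ j, 0 < a j) (hamono : Monotone a) (hb : ∀ j, 0 < b j)
    (m : ℕ → ℕ) (hm : ∀ k, 1 ≤ m k)
    (mmax : ℕ) (hmmax : ∀ k, 1 ≤ k → m k ≤ mmax) (hmmax' : ∃ k, 1 ≤ k ∧ m k = mmax)
    (s : ℕ) (ε : ℝ) (hε : ε ∈ Set.Ioo (0:ℝ) 1) (hx : a 0 < X ω ε) :
    nInfo ω a b m s ε ≤
      (m 0 : ℝ≥0∞) ^ s *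
        ∏ j ∈ Finset.range (jMin ω a s ε),
          (1 + (mmax : ℝ≥0∞) / (m 0 : ℝ≥0∞) *
            ((⌈(X ω ε / a j) ^ ((1 : ℝ) / b j)⌉₊ : ℝ≥0∞) - 1)) :=
  stmt10_general ω a b ha hamono hb m hm mmax hmmax s ε hx
end

section
/- Lower bound on information complexity: for ε∈(0,1) with x(ε) > a_1, n(ε, APP_s) ≥ m_0^s · Π_{j=1}^{min(s, j(ε))} (1 + (m_min/m_0)(⌈(x(ε)/(a_j s))^{1/b_j}⌉ - 1)), where j(ε) = sup{j∈ℕ : x(ε)>a_j} and m_min = min_{k≥1} m_k. -/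
open scoped ENNReal

/-!
The box `∏_j {0, …, N_j - 1}` with `N_j = ⌈(x / (a_j s))^{1/b_j}⌉` for `j < J` and `N_j = 1`
otherwise lies in the region `∑_j a_j k_j^{b_j} < x`, because each of the `s` terms is below
`x / s`. Bounding `m_k` from below by `m_0` at `k = 0` and by `m_min` elsewhere, the weighted
count of the box factors as `∏_j (m_0 + m_min (N_j - 1))`, which is the claimed bound.
-/

theorem mul_rpow_lt_of_lt_ceil {c b y : ℝ} {k : ℕ} (hc : 0 < c) (hb : 0 < b) (hy : 0 ≤ y)
    (hk : k < ⌈(y / c) ^ (1 / b)⌉₊) : c * (k : ℝ) ^ b < y := by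
  have hk' : (k : ℝ) < (y / c) ^ (1 / b) := Nat.lt_ceil.mp hk
  calc c * (k : ℝ) ^ b < c * ((y / c) ^ (1 / b)) ^ b :=
        mul_lt_mul_of_pos_left (Real.rpow_lt_rpow k.cast_nonneg hk' hb) hc
    _ = y := by
        rw [one_div, Real.rpow_inv_rpow (div_nonneg hy hc.le) hb.ne', mul_div_cancel₀ _ hc.ne']

theorem sum_mul_rpow_lt_of_lt_ceil {x : ℝ} (hx : 0 < x) {a b : ℕ → ℝ} (ha : ∀ j, 0 < a j)
    (hb : ∀ j, 0 < b j) {s : ℕ} (k : Fin s → ℕ)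
    (hk : ∀ j : Fin s, k j < ⌈(x / (a j * s)) ^ (1 / b j)⌉₊) :
    ∑ j : Fin s, a j * (k j : ℝ) ^ b j < x := by
  rcases Nat.eq_zero_or_pos s with rfl | hs
  · simpa using hx
  have hsR : (0 : ℝ) < s := by exact_mod_cast hs
  have hterm : ∀ j : Fin s, a j * (k j : ℝ) ^ b j < x / s := fun j => by
    have := mul_rpow_lt_of_lt_ceil (mul_pos (ha j) hsR) (hb j) hx.le (hk j)
    rw [lt_div_iff₀ hsR]
    linarith
  have : Nonempty (Fin s) := Fin.pos_iff_nonempty.mp hs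
  calc ∑ j : Fin s, a j * (k j : ℝ) ^ b j < ∑ _j : Fin s, x / s :=
        Finset.sum_lt_sum_of_nonempty Finset.univ_nonempty fun j _ => hterm j
    _ = x := by
        rw [Finset.sum_const, Finset.card_univ, Fintype.card_fin, nsmul_eq_mul]
        field_simp

theorem ENNReal.prod_sum_range_le_tsum {ι : Type*} [Fintype ι] [DecidableEq ι]
    (w : ℕ → ℝ≥0∞) (N : ι → ℕ) (f : (ι → ℕ) → ℝ≥0∞)
    (hf : ∀ k : ι → ℕ, (∀ j, k j < N j) → ∏ j, w (k j) ≤ f k) :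
    ∏ j, ∑ v ∈ Finset.range (N j), w v ≤ ∑' k, f k := by
  rw [Finset.prod_univ_sum]
  refine (Finset.sum_le_sum fun k hk => hf k fun j => ?_).trans (ENNReal.sum_le_tsum _)
  exact Finset.mem_range.mp (Fintype.mem_piFinset.mp hk j)

theorem ENNReal.sum_range_ite_eq_zero {n : ℕ} (hn : 1 ≤ n) (p q : ℝ≥0∞) :
    ∑ v ∈ Finset.range n, (if v = 0 then p else q) = p + q * ((n : ℝ≥0∞) - 1) := by
  obtain ⟨n, rfl⟩ := Nat.exists_eq_add_of_le' hn
  rw [Finset.sum_range_succ']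
  simp [add_comm, mul_comm]

theorem ENNReal.pow_mul_prod_range_eq_prod_fin {p : ℝ≥0∞} (hp0 : p ≠ 0) (hpt : p ≠ ∞)
    (q : ℝ≥0∞) {J s : ℕ} (hJs : J ≤ s) (u : ℕ → ℝ≥0∞) :
    p ^ s * ∏ j ∈ Finset.range J, (1 + q / p * u j)
      = ∏ j : Fin s, (p + q * if (j : ℕ) < J then u j else 0) := by
  have hfactor : ∀ t : ℝ≥0∞, p + q * t = p * (1 + q / p * t) := fun t => by
    rw [mul_add, mul_one, ← mul_assoc, ENNReal.mul_div_cancel hp0 hpt]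
  have hrange : (Finset.range s).filter (· < J) = Finset.range J := by
    ext j; simp only [Finset.mem_filter, Finset.mem_range]; omega
  simp_rw [Fin.prod_univ_eq_prod_range (fun j => p + q * if j < J then u j else 0), hfactor,
    Finset.prod_mul_distrib, Finset.prod_const, Finset.card_range, ← hrange, Finset.prod_filter]
  congr 1
  refine Finset.prod_congr rfl fun j _ => ?_
  split_ifs <;> simp

theorem pow_mul_prod_le_tsum_box {x : ℝ} (hx : 0 < x) {a b : ℕ → ℝ} (ha : ∀ j, 0 < a j)
    (hb : ∀ j, 0 < b j) {m : ℕ → ℕ} (hm0 : 1 ≤ m 0) {mmin : ℕ}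
    (hmmin : ∀ k, 1 ≤ k → mmin ≤ m k) {s J : ℕ} (hJs : J ≤ s) :
    (m 0 : ℝ≥0∞) ^ s *
        ∏ j ∈ Finset.range J,
          (1 + (mmin : ℝ≥0∞) / (m 0 : ℝ≥0∞) *
            ((⌈(x / (a j * (s : ℝ))) ^ ((1 : ℝ) / b j)⌉₊ : ℝ≥0∞) - 1))
      ≤ ∑' k : Fin s → ℕ,
          if (∑ j : Fin s, a j * ((k j : ℝ) ^ (b j))) < x then
            ∏ j : Fin s, (m (k j) : ℝ≥0∞) else 0 := by
  set N : ℕ → ℕ := fun j => ⌈(x / (a j * (s : ℝ))) ^ ((1 : ℝ) / b j)⌉₊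
  have hN : ∀ j : Fin s, 1 ≤ N j := fun j => Nat.ceil_pos.mpr <|
    Real.rpow_pos_of_pos (div_pos hx (mul_pos (ha j) (by exact_mod_cast j.pos))) _
  set M : Fin s → ℕ := fun j => if (j : ℕ) < J then N j else 1
  have hM : ∀ j, 1 ≤ M j := fun j => by
    simp only [M]; split_ifs
    exacts [hN j, le_rfl]
  have hMN : ∀ j, M j ≤ N j := fun j => by
    simp only [M]; split_ifs
    exacts [le_rfl, hN j]
  set w : ℕ → ℝ≥0∞ := fun v => if v = 0 then (m 0 : ℝ≥0∞) else mmin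
  have hwm : ∀ v, w v ≤ m v := fun v => by
    rcases Nat.eq_zero_or_pos v with rfl | hv
    · simp [w]
    · simpa [w, hv.ne'] using hmmin v hv
  calc _ = ∏ j : Fin s, ((m 0 : ℝ≥0∞) + mmin * ((M j : ℝ≥0∞) - 1)) := by
        rw [ENNReal.pow_mul_prod_range_eq_prod_fin (by simpa using Nat.one_le_iff_ne_zero.mp hm0)
          (ENNReal.natCast_ne_top _) _ hJs]
        refine Finset.prod_congr rfl fun j _ => ?_
        simp only [M]; split_ifs <;> simp [N]
    _ = ∏ j : Fin s, ∑ v ∈ Finset.range (M j), w v :=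
        Finset.prod_congr rfl fun j _ => (ENNReal.sum_range_ite_eq_zero (hM j) _ _).symm
    _ ≤ _ := ENNReal.prod_sum_range_le_tsum w M _ fun k hk => by
        rw [if_pos (sum_mul_rpow_lt_of_lt_ceil hx ha hb k fun j => (hk j).trans_le (hMN j))]
        exact Finset.prod_le_prod' fun j _ => hwm (k j)

theorem stmt11_general (ω : ℝ)
    (a b : ℕ → ℝ) (ha : ∀ j, 0 < a j) (hb : ∀ j, 0 < b j)
    (m : ℕ → ℕ) (hm : ∀ k, 1 ≤ m k)
    (mmin : ℕ) (hmmin : ∀ k, 1 ≤ k → mmin ≤ m k)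
    (s : ℕ) (ε : ℝ) (hx : a 0 < X ω ε) :
    (m 0 : ℝ≥0∞) ^ s *
        ∏ j ∈ Finset.range (jMin ω a s ε),
          (1 + (mmin : ℝ≥0∞) / (m 0 : ℝ≥0∞) *
            ((⌈(X ω ε / (a j * (s : ℝ))) ^ ((1 : ℝ) / b j)⌉₊ : ℝ≥0∞) - 1))
      ≤ nInfo ω a b m s ε := by
  have hJs : jMin ω a s ε ≤ s := ENat.toNat_le_of_le_natCast (min_le_left _ _)
  unfold nInfo
  convert pow_mul_prod_le_tsum_box ((ha 0).trans hx) ha hb (hm 0) hmmin hJs using 2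

/-- Lower bound: for `ε ∈ (0,1)` with `x(ε) > a_1`,
`n(ε,APP_s) ≥ m_0^s ∏_{j=1}^{min(s,j(ε))} (1 + (m_min/m_0)(⌈(x(ε)/(a_j s))^{1/b_j}⌉ - 1))`. -/
theorem stmt11 (ω : ℝ) (hω : ω ∈ Set.Ioo (0:ℝ) 1)
    (a b : ℕ → ℝ) (ha : ∀ j, 0 < a j) (hamono : Monotone a) (hb : ∀ j, 0 < b j)
    (m : ℕ → ℕ) (hm : ∀ k, 1 ≤ m k)
    (mmin : ℕ) (hmmin : ∀ k, 1 ≤ k → mmin ≤ m k) (hmmin' : ∃ k, 1 ≤ k ∧ m k = mmin)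
    (s : ℕ) (ε : ℝ) (hε : ε ∈ Set.Ioo (0:ℝ) 1) (hx : a 0 < X ω ε) :
    (m 0 : ℝ≥0∞) ^ s *
        ∏ j ∈ Finset.range (jMin ω a s ε),
          (1 + (mmin : ℝ≥0∞) / (m 0 : ℝ≥0∞) *
            ((⌈(X ω ε / (a j * (s : ℝ))) ^ ((1 : ℝ) / b j)⌉₊ : ℝ≥0∞) - 1))
      ≤ nInfo ω a b m s ε :=
  stmt11_general ω a b ha hb m hm mmin hmmin s ε hx
end

section
/- Uniform exponential convergence holds if and only if Σ_{j=1}^∞ 1/b_j < ∞: there exist q∈(0,1), p>0 and for each s positive C_s, M_s with e(n, APP_s) ≤ C_s q^{(n/M_s)^p} for all n∈ℕ and all s∈ℕ, if and only if B = Σ_{j=1}^∞ b_j^{-1} < ∞; and if B < ∞ the supremum of admissible p equals 1/B. -/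
open scoped ENNReal

/-- The `n`-th minimal worst-case error `e(n, APP_s)`: the infimum of error thresholds
`ε > 0` attainable with at most `n` linear functionals. -/
noncomputable def minErr (ω : ℝ) (a b : ℕ → ℝ) (m : ℕ → ℕ) (s n : ℕ) : ℝ :=
  sInf {ε : ℝ | 0 < ε ∧ nInfo ω a b m s ε ≤ (n : ℝ≥0∞)}

/-! The region `{k : ∑ j, a j * k j ^ b j < x}` contains the box `k j < (x / (s a_{s-1}))^{1/b_j}`
and lies in the box `k j < (x / a₀)^{1/b_j}`, so up to factors depending only on `s` the weighted
count is `x ^ β_s` with `β_s = ∑_{j<s} 1/b_j`. As `e(n) = ω^{x/2}` at the cutoff `x` where the count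
reaches `n`, `e(n)` is comparable to `ω^{c_s n^{1/β_s}}`. A bound `C q^{(n/M)^p}` therefore forces
`p ≤ 1/β_s` for every `s`, so the partial sums `β_s` are bounded by `1/p`; conversely, if
`B = ∑ 1/b_j < ∞`, the outer box gives the bound with `q = √ω` and `p = 1/B` in every dimension. -/

open Finset Filter Topology

lemma rpow_sum_le_prod_ceil {ι : Type*} (t : Finset ι) {f : ι → ℝ} {y : ℝ} (hy : 0 ≤ y)
    (hf : ∀ i ∈ t, 0 ≤ f i) : y ^ (∑ i ∈ t, f i) ≤ ∏ i ∈ t, (⌈y ^ f i⌉₊ : ℝ) := by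
  rw [Real.rpow_sum_of_nonneg hy hf]
  exact prod_le_prod (fun i _ => by positivity) fun i _ => Nat.le_ceil _

lemma prod_ceil_le_two_pow_mul_rpow_sum {ι : Type*} (t : Finset ι) {f : ι → ℝ} {y : ℝ}
    (hy : 1 ≤ y) (hf : ∀ i ∈ t, 0 ≤ f i) :
    ∏ i ∈ t, (⌈y ^ f i⌉₊ : ℝ) ≤ 2 ^ #t * y ^ (∑ i ∈ t, f i) := by
  rw [Real.rpow_sum_of_nonneg (by linarith) hf, ← prod_const, ← prod_mul_distrib]
  refine prod_le_prod (fun i _ => by positivity) fun i hi => Nat.ceil_le_two_mul ?_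
  linarith [Real.one_le_rpow hy (hf i hi)]

lemma le_of_forall_mul_rpow_le_add_mul_rpow {p r c₁ c₂ c₃ : ℝ} (hp : 0 < p) (hc₁ : 0 < c₁)
    (h : ∀ n : ℕ, 1 ≤ n → c₁ * (n : ℝ) ^ p ≤ c₂ + c₃ * (n : ℝ) ^ r) : p ≤ r := by
  by_contra! hrp
  have hlim : Tendsto (fun n : ℕ => c₂ * (n : ℝ) ^ (-p) + c₃ * (n : ℝ) ^ (-(p - r)))
      atTop (𝓝 0) := by
    have hpow {e : ℝ} (he : 0 < e) : Tendsto (fun n : ℕ => (n : ℝ) ^ (-e)) atTop (𝓝 0) :=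
      (tendsto_rpow_neg_atTop he).comp tendsto_natCast_atTop_atTop
    simpa using ((hpow hp).const_mul c₂).add ((hpow (sub_pos.2 hrp)).const_mul c₃)
  obtain ⟨n, hsmall, hn⟩ :=
    ((hlim.eventually (gt_mem_nhds hc₁)).and (eventually_ge_atTop 1)).exists
  have hn₀ : (0 : ℝ) < n := by exact_mod_cast hn
  have hscale : (c₂ * (n : ℝ) ^ (-p) + c₃ * (n : ℝ) ^ (-(p - r))) * (n : ℝ) ^ p
      = c₂ + c₃ * (n : ℝ) ^ r := by
    rw [add_mul, mul_assoc, mul_assoc, ← Real.rpow_add hn₀, ← Real.rpow_add hn₀]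
    simp
  nlinarith [h n hn, Real.rpow_pos_of_pos hn₀ p]

noncomputable def cost (a b : ℕ → ℝ) {s : ℕ} (k : Fin s → ℕ) : ℝ :=
  ∑ j : Fin s, a j * (k j : ℝ) ^ b j

noncomputable def weightedCount (a b : ℕ → ℝ) (m : ℕ → ℕ) (s : ℕ) (x : ℝ) : ℝ≥0∞ :=
  ∑' k : Fin s → ℕ, if cost a b k < x then ∏ j : Fin s, (m (k j) : ℝ≥0∞) else 0

section Counting

variable {a b : ℕ → ℝ} {m : ℕ → ℕ} {s : ℕ}

lemma nInfo_eq_weightedCount (ω : ℝ) (ε : ℝ) :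
    nInfo ω a b m s ε = weightedCount a b m s (X ω ε) := rfl

lemma cost_nonneg (ha : ∀ j, 0 < a j) (k : Fin s → ℕ) : 0 ≤ cost a b k :=
  sum_nonneg fun j _ => mul_nonneg (ha j).le (by positivity)

lemma weightedCount_eq_zero (ha : ∀ j, 0 < a j) {x : ℝ} (hx : x ≤ 0) :
    weightedCount a b m s x = 0 :=
  ENNReal.tsum_eq_zero.2 fun k => if_neg (hx.trans (cost_nonneg ha k)).not_gt

lemma lt_rpow_inv_of_cost_lt (ha : ∀ j, 0 < a j) (hamono : Monotone a) (hb : ∀ j, 0 < b j)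
    {k : Fin s → ℕ} {x : ℝ} (hk : cost a b k < x) (j : Fin s) :
    (k j : ℝ) < (x / a 0) ^ (b j)⁻¹ := by
  have hterm : a 0 * (k j : ℝ) ^ b j < x :=
    calc a 0 * (k j : ℝ) ^ b j ≤ a j * (k j : ℝ) ^ b j :=
          mul_le_mul_of_nonneg_right (hamono (Nat.zero_le _)) (by positivity)
      _ ≤ cost a b k :=
          single_le_sum (f := fun i : Fin s => a i * (k i : ℝ) ^ b i)
            (fun i _ => mul_nonneg (ha i).le (by positivity)) (mem_univ j)
      _ < x := hk
  rw [Real.lt_rpow_inv_iff_of_pos (by positivity)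
    (div_nonneg ((cost_nonneg ha k).trans hk.le) (ha 0).le) (hb j), lt_div_iff₀' (ha 0)]
  exact hterm

lemma cost_lt_of_lt_rpow_inv (ha : ∀ j, 0 < a j) (hamono : Monotone a) (hb : ∀ j, 0 < b j)
    (hs : 1 ≤ s) {k : Fin s → ℕ} {x : ℝ} (hx : 0 < x)
    (hk : ∀ j, (k j : ℝ) < (x / (s * a (s - 1))) ^ (b j)⁻¹) : cost a b k < x := by
  have hsA : 0 < (s : ℝ) * a (s - 1) := mul_pos (by exact_mod_cast hs) (ha _)
  have hterm (j : Fin s) : a j * (k j : ℝ) ^ b j < x / s := by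
    have hpow : (k j : ℝ) ^ b j < x / (s * a (s - 1)) :=
      (Real.lt_rpow_inv_iff_of_pos (by positivity) (by positivity) (hb j)).1 (hk j)
    calc a j * (k j : ℝ) ^ b j ≤ a (s - 1) * (k j : ℝ) ^ b j :=
          mul_le_mul_of_nonneg_right (hamono (Nat.le_sub_one_of_lt j.2)) (by positivity)
      _ < a (s - 1) * (x / (s * a (s - 1))) := mul_lt_mul_of_pos_left hpow (ha _)
      _ = x / s := by field_simp [(ha (s - 1)).ne']
  have : Nonempty (Fin s) := ⟨⟨0, hs⟩⟩
  calc cost a b k < ∑ _j : Fin s, x / s := sum_lt_sum_of_nonempty univ_nonempty fun j _ => hterm j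
    _ = x := by simp only [sum_const, card_univ, Fintype.card_fin, nsmul_eq_mul]; field_simp

lemma weightedCount_le (ha : ∀ j, 0 < a j) (hamono : Monotone a) (hb : ∀ j, 0 < b j)
    {M : ℕ} (hmM : ∀ k, m k ≤ M) (x : ℝ) :
    weightedCount a b m s x ≤ ((∏ j : Fin s, ⌈(x / a 0) ^ (b j)⁻¹⌉₊) * M ^ s : ℕ) := by
  classical
  set T := Fintype.piFinset fun j : Fin s => range ⌈(x / a 0) ^ (b j)⁻¹⌉₊
  have hsupp : ∀ k ∉ T, (if cost a b k < x then ∏ j, (m (k j) : ℝ≥0∞) else 0) = 0 :=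
    fun k hk => if_neg fun hlt => hk <| Fintype.mem_piFinset.2 fun j =>
      mem_range.2 <| Nat.lt_ceil.2 <| lt_rpow_inv_of_cost_lt ha hamono hb hlt j
  calc weightedCount a b m s x
      = ∑ k ∈ T, if cost a b k < x then ∏ j, (m (k j) : ℝ≥0∞) else 0 := tsum_eq_sum hsupp
    _ ≤ ∑ _k ∈ T, (M : ℝ≥0∞) ^ s := by
        refine sum_le_sum fun k _ => ?_
        split_ifs
        · calc ∏ j, (m (k j) : ℝ≥0∞) ≤ ∏ _j : Fin s, (M : ℝ≥0∞) :=
                prod_le_prod' fun j _ => by exact_mod_cast hmM _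
            _ = (M : ℝ≥0∞) ^ s := by simp
        · exact zero_le
    _ = _ := by simp [T, Fintype.card_piFinset]

lemma prod_ceil_le_weightedCount (ha : ∀ j, 0 < a j) (hamono : Monotone a) (hb : ∀ j, 0 < b j)
    (hm : ∀ k, 1 ≤ m k) (hs : 1 ≤ s) {x : ℝ} (hx : 0 < x) :
    ((∏ j : Fin s, ⌈(x / (s * a (s - 1))) ^ (b j)⁻¹⌉₊ : ℕ) : ℝ≥0∞) ≤ weightedCount a b m s x := by
  classical
  set T := Fintype.piFinset fun j : Fin s => range ⌈(x / (s * a (s - 1))) ^ (b j)⁻¹⌉₊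
  calc ((∏ j : Fin s, ⌈(x / (s * a (s - 1))) ^ (b j)⁻¹⌉₊ : ℕ) : ℝ≥0∞)
      = ∑ _k ∈ T, (1 : ℝ≥0∞) := by simp [T, Fintype.card_piFinset]
    _ ≤ ∑ k ∈ T, if cost a b k < x then ∏ j, (m (k j) : ℝ≥0∞) else 0 := by
        refine sum_le_sum fun k hk => ?_
        rw [if_pos (cost_lt_of_lt_rpow_inv ha hamono hb hs hx fun j =>
          Nat.lt_ceil.1 (mem_range.1 (Fintype.mem_piFinset.1 hk j)))]
        exact one_le_prod' fun j _ => by exact_mod_cast hm _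
    _ ≤ weightedCount a b m s x := ENNReal.sum_le_tsum T

end Counting

section MinimalError

variable {ω : ℝ} {a b : ℕ → ℝ} {m : ℕ → ℕ} {s n : ℕ}

lemma X_eq (ω ε : ℝ) : X ω ε = 2 * Real.log ε / Real.log ω := by
  simp only [X, Real.log_pow, Real.log_inv]
  push_cast
  rw [mul_neg, neg_div_neg_eq]

lemma X_rpow_div_two (hω : ω ∈ Set.Ioo (0 : ℝ) 1) (x : ℝ) : X ω (ω ^ (x / 2)) = x := by
  rw [X_eq, Real.log_rpow hω.1]
  field_simp [(Real.log_neg hω.1 hω.2).ne]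

lemma rpow_X_div_two (hω : ω ∈ Set.Ioo (0 : ℝ) 1) {ε : ℝ} (hε : 0 < ε) :
    ω ^ (X ω ε / 2) = ε := by
  rw [X_eq, Real.rpow_def_of_pos hω.1, mul_div_assoc, mul_div_cancel_left₀ _ two_ne_zero,
    mul_div_cancel₀ _ (Real.log_neg hω.1 hω.2).ne, Real.exp_log hε]

lemma minErr_le_rpow (hω : ω ∈ Set.Ioo (0 : ℝ) 1) {x : ℝ}
    (h : weightedCount a b m s x ≤ n) : minErr ω a b m s n ≤ ω ^ (x / 2) :=
  csInf_le ⟨0, fun _ hε => hε.1.le⟩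
    ⟨Real.rpow_pos_of_pos hω.1 _, by rwa [nInfo_eq_weightedCount, X_rpow_div_two hω]⟩

lemma rpow_le_minErr (hω : ω ∈ Set.Ioo (0 : ℝ) 1) (ha : ∀ j, 0 < a j) {L : ℝ} (hL : 0 ≤ L)
    (h : ∀ x, 0 < x → weightedCount a b m s x ≤ n → x ≤ L) :
    ω ^ (L / 2) ≤ minErr ω a b m s n := by
  have hone : (1 : ℝ) ∈ {ε : ℝ | 0 < ε ∧ nInfo ω a b m s ε ≤ n} :=
    ⟨one_pos, by rw [nInfo_eq_weightedCount, weightedCount_eq_zero ha (by simp [X])]; exact zero_le⟩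
  refine le_csInf ⟨1, hone⟩ fun ε ⟨hε, hcount⟩ => ?_
  have hXL : X ω ε ≤ L := by
    rcases le_or_gt (X ω ε) 0 with hX | hX
    · exact hX.trans hL
    · exact h _ hX hcount
  rw [← rpow_X_div_two hω hε]
  exact Real.rpow_le_rpow_of_exponent_ge hω.1 hω.2.le (by linarith)

lemma le_mul_rpow_of_weightedCount_le (ha : ∀ j, 0 < a j) (hamono : Monotone a)
    (hb : ∀ j, 0 < b j) (hm : ∀ k, 1 ≤ m k) (hs : 1 ≤ s) {x : ℝ} (hx : 0 < x)
    (h : weightedCount a b m s x ≤ n) :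
    x ≤ s * a (s - 1) * (n : ℝ) ^ (∑ j ∈ range s, (b j)⁻¹)⁻¹ := by
  have hsA : 0 < (s : ℝ) * a (s - 1) := mul_pos (by exact_mod_cast hs) (ha _)
  have hβ : 0 < ∑ j ∈ range s, (b j)⁻¹ :=
    sum_pos (fun j _ => inv_pos.2 (hb j)) (nonempty_range_iff.2 (by omega))
  have hcount : (∏ j : Fin s, ⌈(x / (s * a (s - 1))) ^ (b j)⁻¹⌉₊ : ℕ) ≤ n := by
    exact_mod_cast (prod_ceil_le_weightedCount ha hamono hb hm hs hx).trans h
  have hbox : (x / (s * a (s - 1))) ^ (∑ j ∈ range s, (b j)⁻¹) ≤ n :=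
    calc (x / (s * a (s - 1))) ^ (∑ j ∈ range s, (b j)⁻¹)
        ≤ ∏ j ∈ range s, (⌈(x / (s * a (s - 1))) ^ (b j)⁻¹⌉₊ : ℝ) :=
          rpow_sum_le_prod_ceil _ (by positivity) fun j _ => (inv_pos.2 (hb j)).le
      _ = ((∏ j : Fin s, ⌈(x / (s * a (s - 1))) ^ (b j)⁻¹⌉₊ : ℕ) : ℝ) := by
          rw [← Fin.prod_univ_eq_prod_range]; push_cast; rfl
      _ ≤ n := by exact_mod_cast hcount
  rw [← div_le_iff₀' hsA]
  exact (Real.le_rpow_inv_iff_of_pos (by positivity) (by positivity) hβ).2 hbox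

lemma rpow_le_minErr_of_one_le (hω : ω ∈ Set.Ioo (0 : ℝ) 1) (ha : ∀ j, 0 < a j)
    (hamono : Monotone a) (hb : ∀ j, 0 < b j) (hm : ∀ k, 1 ≤ m k) (hs : 1 ≤ s) (n : ℕ) :
    ω ^ (s * a (s - 1) * (n : ℝ) ^ (∑ j ∈ range s, (b j)⁻¹)⁻¹ / 2) ≤ minErr ω a b m s n :=
  rpow_le_minErr hω ha (mul_nonneg (mul_pos (by exact_mod_cast hs) (ha _)).le (by positivity))
    fun _ hx h => le_mul_rpow_of_weightedCount_le ha hamono hb hm hs hx h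

lemma weightedCount_le_of_two_mul_pow_mul_rpow_le (ha : ∀ j, 0 < a j) (hamono : Monotone a)
    (hb : ∀ j, 0 < b j) {M : ℕ} (hmM : ∀ k, m k ≤ M) {u : ℝ} (hu : 1 ≤ u)
    (hn : (2 * M : ℝ) ^ s * u ^ (∑ j ∈ range s, (b j)⁻¹) ≤ n) :
    weightedCount a b m s (a 0 * (u - 1)) ≤ n := by
  refine (weightedCount_le ha hamono hb hmM _).trans ?_
  have hbox : (((∏ j : Fin s, ⌈(a 0 * (u - 1) / a 0) ^ (b j)⁻¹⌉₊) * M ^ s : ℕ) : ℝ) ≤ n :=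
    calc (((∏ j : Fin s, ⌈(a 0 * (u - 1) / a 0) ^ (b j)⁻¹⌉₊) * M ^ s : ℕ) : ℝ)
        = (∏ j ∈ range s, (⌈(u - 1) ^ (b j)⁻¹⌉₊ : ℝ)) * M ^ s := by
          rw [mul_div_cancel_left₀ _ (ha 0).ne',
            ← Fin.prod_univ_eq_prod_range (fun j => (⌈(u - 1) ^ (b j)⁻¹⌉₊ : ℝ))]
          push_cast; rfl
      _ ≤ (∏ j ∈ range s, (⌈u ^ (b j)⁻¹⌉₊ : ℝ)) * M ^ s := by
          gcongr with j
          · exact (inv_pos.2 (hb j)).le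
          · linarith
      _ ≤ (2 ^ s * u ^ (∑ j ∈ range s, (b j)⁻¹)) * M ^ s := by
          gcongr
          simpa using prod_ceil_le_two_pow_mul_rpow_sum (range s) hu
            fun j _ => (inv_pos.2 (hb j)).le
      _ = (2 * M : ℝ) ^ s * u ^ (∑ j ∈ range s, (b j)⁻¹) := by ring
      _ ≤ n := hn
  exact_mod_cast hbox

end MinimalError

def UniformExpConv (ω : ℝ) (a b : ℕ → ℝ) (m : ℕ → ℕ) (q p : ℝ) : Prop :=
  ∀ s : ℕ, 1 ≤ s → ∃ C M : ℝ, 0 < C ∧ 0 < M ∧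
    ∀ n : ℕ, 1 ≤ n → minErr ω a b m s n ≤ C * q ^ (((n : ℝ) / M) ^ p)

section UniformExponentialConvergence

variable {ω : ℝ} {a b : ℕ → ℝ} {m : ℕ → ℕ}

lemma sum_range_inv_le_of_uniformExpConv (hω : ω ∈ Set.Ioo (0 : ℝ) 1) (ha : ∀ j, 0 < a j)
    (hamono : Monotone a) (hb : ∀ j, 0 < b j) (hm : ∀ k, 1 ≤ m k) {q p : ℝ}
    (hq : q ∈ Set.Ioo (0 : ℝ) 1) (hp : 0 < p) (h : UniformExpConv ω a b m q p) (s : ℕ) :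
    ∑ j ∈ range s, (b j)⁻¹ ≤ p⁻¹ := by
  rcases Nat.eq_zero_or_pos s with rfl | hs
  · simpa using (inv_pos.2 hp).le
  obtain ⟨C, M, hC, hM, hbound⟩ := h s hs
  have hβ : 0 < ∑ j ∈ range s, (b j)⁻¹ :=
    sum_pos (fun j _ => inv_pos.2 (hb j)) (nonempty_range_iff.2 (by omega))
  suffices p ≤ (∑ j ∈ range s, (b j)⁻¹)⁻¹ from (le_inv_comm₀ hp hβ).1 this
  -- compare logarithms of the lower bound on `minErr` and of the assumed upper bound
  refine le_of_forall_mul_rpow_le_add_mul_rpow hp (c₂ := Real.log C)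
    (c₃ := s * a (s - 1) / 2 * -Real.log ω)
    (div_pos (neg_pos.2 (Real.log_neg hq.1 hq.2)) (Real.rpow_pos_of_pos hM p)) fun n hn => ?_
  have hlog := Real.log_le_log (Real.rpow_pos_of_pos hω.1 _)
    ((rpow_le_minErr_of_one_le hω ha hamono hb hm hs n).trans (hbound n hn))
  rw [Real.log_rpow hω.1, Real.log_mul hC.ne' (Real.rpow_pos_of_pos hq.1 _).ne',
    Real.log_rpow hq.1, Real.div_rpow (Nat.cast_nonneg _) hM.le] at hlog
  have hlhs : -Real.log q / M ^ p * (n : ℝ) ^ p = -((n : ℝ) ^ p / M ^ p * Real.log q) := by ring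
  linarith

lemma uniformExpConv_of_summable (hω : ω ∈ Set.Ioo (0 : ℝ) 1) (ha : ∀ j, 0 < a j)
    (hamono : Monotone a) (hb : ∀ j, 0 < b j) (hmbd : ∃ M, ∀ k, m k ≤ M)
    (hsum : Summable fun j => (b j)⁻¹) :
    UniformExpConv ω a b m (ω ^ (2 : ℝ)⁻¹) (∑' j, (b j)⁻¹)⁻¹ := by
  obtain ⟨M, hmM⟩ := hmbd
  set B := ∑' j, (b j)⁻¹
  have hB : 0 < B := hsum.tsum_pos (fun j => (inv_pos.2 (hb j)).le) 0 (inv_pos.2 (hb 0))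
  intro s _
  set K : ℝ := (2 * (M + 1 : ℕ) : ℝ) ^ s
  have hK : 0 < K := by positivity
  refine ⟨(ω ^ (2 : ℝ)⁻¹) ^ (-a 0), K / a 0 ^ B,
    Real.rpow_pos_of_pos (Real.rpow_pos_of_pos hω.1 _) _,
    div_pos hK (Real.rpow_pos_of_pos (ha 0) _), fun n _ => ?_⟩
  set u := ((n : ℝ) / K) ^ B⁻¹
  have hcount : weightedCount a b m s (a 0 * (u - 1)) ≤ n := by
    rcases le_or_gt 1 u with hu | hu
    · refine weightedCount_le_of_two_mul_pow_mul_rpow_le ha hamono hb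
        (fun k => (hmM k).trans M.le_succ) hu ?_
      calc K * u ^ (∑ j ∈ range s, (b j)⁻¹) ≤ K * u ^ B := by
            gcongr
            exact hsum.sum_le_tsum _ fun j _ => (inv_pos.2 (hb j)).le
        _ = n := by rw [Real.rpow_inv_rpow (by positivity) hB.ne', mul_div_cancel₀ _ hK.ne']
    · rw [weightedCount_eq_zero ha (by nlinarith [ha 0])]
      exact zero_le
  have hu : ((n : ℝ) / (K / a 0 ^ B)) ^ B⁻¹ = a 0 * u := by
    rw [div_div_eq_mul_div, mul_div_right_comm, Real.mul_rpow (div_nonneg (Nat.cast_nonneg _) hK.le)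
      (Real.rpow_pos_of_pos (ha 0) _).le,
      Real.rpow_rpow_inv (ha 0).le hB.ne', mul_comm]
  calc minErr ω a b m s n ≤ ω ^ (a 0 * (u - 1) / 2) := minErr_le_rpow hω hcount
    _ = _ := by
        rw [hu, ← Real.rpow_add (Real.rpow_pos_of_pos hω.1 _), ← Real.rpow_mul hω.1.le]
        ring_nf

end UniformExponentialConvergence

/-- Uniform exponential convergence (`∃ q ∈ (0,1), p > 0` and for each `s` constants
`C_s, M_s > 0` with `e(n, APP_s) ≤ C_s q^{(n/M_s)^p}` for all `n`) holds iff
`B = ∑_j 1/b_j < ∞`; and if `B < ∞` then the supremum of admissible `p` equals `1/B`. -/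
theorem stmt14 (ω : ℝ) (hω : ω ∈ Set.Ioo (0:ℝ) 1)
    (a b : ℕ → ℝ) (ha : ∀ j, 0 < a j) (hamono : Monotone a)
    (b₀ : ℝ) (hb₀ : 0 < b₀) (hb : ∀ j, b₀ ≤ b j)
    (m : ℕ → ℕ) (hm : ∀ k, 1 ≤ m k) (hmbd : ∃ M, ∀ k, m k ≤ M) :
    ((∃ q p : ℝ, q ∈ Set.Ioo (0:ℝ) 1 ∧ 0 < p ∧
        ∀ s : ℕ, 1 ≤ s → ∃ C M : ℝ, 0 < C ∧ 0 < M ∧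
          ∀ n : ℕ, 1 ≤ n → minErr ω a b m s n ≤ C * q ^ (((n : ℝ) / M) ^ p))
      ↔ Summable (fun j : ℕ => (b j)⁻¹)) ∧
    (Summable (fun j : ℕ => (b j)⁻¹) →
      sSup {p : ℝ | 0 < p ∧ ∃ q ∈ Set.Ioo (0:ℝ) 1,
          ∀ s : ℕ, 1 ≤ s → ∃ C M : ℝ, 0 < C ∧ 0 < M ∧
            ∀ n : ℕ, 1 ≤ n → minErr ω a b m s n ≤ C * q ^ (((n : ℝ) / M) ^ p)}
        = (∑' j : ℕ, (b j)⁻¹)⁻¹) := by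
  have hb' : ∀ j, 0 < b j := fun j => hb₀.trans_le (hb j)
  have hinv : ∀ j, 0 ≤ (b j)⁻¹ := fun j => (inv_pos.2 (hb' j)).le
  have hq : ω ^ (2 : ℝ)⁻¹ ∈ Set.Ioo (0 : ℝ) 1 :=
    ⟨Real.rpow_pos_of_pos hω.1 _, Real.rpow_lt_one hω.1.le hω.2 (by norm_num)⟩
  have hB (hsum : Summable fun j => (b j)⁻¹) : 0 < ∑' j, (b j)⁻¹ :=
    hsum.tsum_pos hinv 0 (inv_pos.2 (hb' 0))
  have hpartial {q p : ℝ} (hq : q ∈ Set.Ioo (0 : ℝ) 1) (hp : 0 < p)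
      (h : UniformExpConv ω a b m q p) (s : ℕ) : ∑ j ∈ range s, (b j)⁻¹ ≤ p⁻¹ :=
    sum_range_inv_le_of_uniformExpConv hω ha hamono hb' hm hq hp h s
  have hsuff (hsum : Summable fun j => (b j)⁻¹) :=
    uniformExpConv_of_summable hω ha hamono hb' hmbd hsum
  refine ⟨⟨fun ⟨q, p, hq, hp, h⟩ => summable_of_sum_range_le hinv (hpartial hq hp h),
    fun hsum => ⟨_, _, hq, inv_pos.2 (hB hsum), hsuff hsum⟩⟩, fun hsum => ?_⟩
  refine IsGreatest.csSup_eq ⟨⟨inv_pos.2 (hB hsum), _, hq, hsuff hsum⟩, ?_⟩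
  rintro p ⟨hp, q, hq, h⟩
  exact (le_inv_comm₀ hp (hB hsum)).2 (hsum.tsum_le_of_sum_range_le (hpartial hq hp h))
end

section
/- Zeta-function product bound: for any τ > 0, Π_{j=1}^s (m_0 + m_1 ω^{τ a_j}) ≤ Σ_{k=1}^∞ λ_{s,k}^τ = Π_{j=1}^s (m_0 + Σ_{k=1}^∞ m_k ω^{τ a_j k^{b_j}}) ≤ Π_{j=1}^s (m_0 + C_τ ω^{τ a_j}), where C_τ = m_max Σ_{k=1}^∞ ω^{τ a_1 (k^{b_0} - 1)} < ∞ and b_0 = inf_j b_j > 0. -/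
open scoped ENNReal
open Real Filter Asymptotics

/-! The series over `ℕ₀^s` is a product of one-dimensional series (Tonelli in `ℝ≥0∞`). In the
`j`-th factor the term `k = 0` is `m₀` and the term `k = 1` alone gives the lower bound. For
the upper bound,
`ω^{τ a_j k^{b_j}} = ω^{τ a_j (k^{b_j} - 1)} ω^{τ a_j} ≤ ω^{τ a_1 (k^{b₀} - 1)} ω^{τ a_j}`
since `a_j ≥ a_1`, `b_j ≥ b₀` and `k ≥ 1`; and `C_τ < ∞` because `r^{n^{b₀}}` with `r < 1`
decays faster than `n⁻²`. -/

/-- `∑_k λ_{s,k}^τ = ∑_{k ∈ ℕ₀^s} ∏_j m_{k_j} ω^{τ a_j k_j^{b_j}}` (in `ℝ≥0∞`). -/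
noncomputable def zetaSum (ω : ℝ) (a b : ℕ → ℝ) (m : ℕ → ℕ) (τ : ℝ) (s : ℕ) : ℝ≥0∞ :=
  ∑' k : Fin s → ℕ,
    ∏ j : Fin s, ((m (k j) : ℝ≥0∞) * ENNReal.ofReal (ω ^ (τ * a j * ((k j : ℝ) ^ (b j)))))

theorem ENNReal.tsum_pi_prod : ∀ {s : ℕ} {β : Fin s → Type*} (f : ∀ j, β j → ℝ≥0∞),
    ∑' k : (∀ j, β j), ∏ j, f j (k j) = ∏ j, ∑' n, f j n
  | 0, _, _ => by simp
  | s + 1, β, f => by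
    rw [← (Fin.consEquiv β).tsum_eq, ENNReal.tsum_prod', Fin.prod_univ_succ,
      ← ENNReal.tsum_pi_prod (fun j => f j.succ), ← ENNReal.tsum_mul_right]
    refine tsum_congr fun n => ?_
    rw [← ENNReal.tsum_mul_left]
    refine tsum_congr fun k => ?_
    simp [Fin.consEquiv, Fin.prod_univ_succ]

theorem summable_rpow_natCast_rpow {r p : ℝ} (hr0 : 0 < r) (hr1 : r < 1) (hp : 0 < p) :
    Summable fun n : ℕ => r ^ ((n : ℝ) ^ p) := by
  have hc : 0 < -log r := neg_pos.2 (log_neg hr0 hr1)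
  have hlittle : (fun x : ℝ => exp (-(-log r) * x)) =o[atTop] fun x => x ^ (-2 / p) :=
    isLittleO_exp_neg_mul_rpow_atTop hc _
  have hnat := (hlittle.comp_tendsto (tendsto_rpow_atTop hp)).comp_tendsto
    tendsto_natCast_atTop_atTop
  refine summable_of_isBigO_nat (summable_nat_rpow.2 (by norm_num : (-2 : ℝ) < -1)) ?_
  refine (hnat.isBigO.congr_left fun n => ?_).congr_right fun n => ?_
  · simp [rpow_def_of_pos hr0, mul_comm]
  · simp only [Function.comp_apply]
    rw [← rpow_mul (Nat.cast_nonneg n), mul_div_cancel₀ _ hp.ne']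

section Series

variable {ω c d p q : ℝ}

theorem tsum_ofReal_rpow_mul_sub_one_ne_top (hω0 : 0 < ω) (hω1 : ω < 1) (hc : 0 < c)
    (hp : 0 < p) : ∑' k : ℕ, ENNReal.ofReal (ω ^ (c * (((k : ℝ) + 1) ^ p - 1))) ≠ ⊤ := by
  have hr0 : 0 < ω ^ c := rpow_pos_of_pos hω0 c
  have hr1 : ω ^ c < 1 := rpow_lt_one hω0.le hω1 hc
  have hsum :=
    ((summable_nat_add_iff 1).2 (summable_rpow_natCast_rpow hr0 hr1 hp)).mul_left (ω ^ (-c))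
  refine Summable.tsum_ofReal_ne_top (hsum.congr fun k => ?_)
  rw [← rpow_mul hω0.le, ← rpow_add hω0]
  push_cast
  ring_nf

theorem rpow_mul_rpow_le_rpow_mul_sub_one_mul_rpow (hω0 : 0 < ω) (hω1 : ω ≤ 1) {x : ℝ}
    (hx : 1 ≤ x) (hc : 0 ≤ c) (hcd : c ≤ d) (hp : 0 ≤ p) (hpq : p ≤ q) :
    ω ^ (d * x ^ q) ≤ ω ^ (c * (x ^ p - 1)) * ω ^ d := by
  have hxp : 1 ≤ x ^ p := one_le_rpow hx hp
  have hexp : c * (x ^ p - 1) ≤ d * (x ^ q - 1) :=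
    mul_le_mul hcd (by linarith [rpow_le_rpow_of_exponent_le hx hpq]) (by linarith)
      (hc.trans hcd)
  calc ω ^ (d * x ^ q) = ω ^ (d * (x ^ q - 1)) * ω ^ d := by
        rw [← rpow_add hω0]; ring_nf
    _ ≤ ω ^ (c * (x ^ p - 1)) * ω ^ d :=
        mul_le_mul_of_nonneg_right (rpow_le_rpow_of_exponent_ge hω0 hω1 hexp)
          (rpow_nonneg hω0.le d)

theorem tsum_natCast_mul_ofReal_rpow_eq_add (m : ℕ → ℕ) (hp : p ≠ 0) :
    ∑' k : ℕ, (m k : ℝ≥0∞) * ENNReal.ofReal (ω ^ (c * (k : ℝ) ^ p))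
      = m 0 + ∑' k : ℕ, (m (k + 1) : ℝ≥0∞) * ENNReal.ofReal (ω ^ (c * ((k : ℝ) + 1) ^ p)) := by
  rw [tsum_eq_zero_add' ENNReal.summable]
  simp [zero_rpow hp]

theorem tsum_natCast_mul_ofReal_rpow_le (hω0 : 0 < ω) (hω1 : ω ≤ 1) (hc : 0 ≤ c) (hcd : c ≤ d)
    (hp : 0 ≤ p) (hpq : p ≤ q) {m : ℕ → ℕ} {M : ℕ} (hM : ∀ k, 1 ≤ k → m k ≤ M) :
    ∑' k : ℕ, (m (k + 1) : ℝ≥0∞) * ENNReal.ofReal (ω ^ (d * ((k : ℝ) + 1) ^ q))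
      ≤ (M * ∑' k : ℕ, ENNReal.ofReal (ω ^ (c * (((k : ℝ) + 1) ^ p - 1)))) *
          ENNReal.ofReal (ω ^ d) := by
  rw [← ENNReal.tsum_mul_left, ← ENNReal.tsum_mul_right]
  refine ENNReal.tsum_le_tsum fun k => ?_
  rw [mul_assoc, ← ENNReal.ofReal_mul (rpow_nonneg hω0.le _)]
  gcongr
  · exact hM _ k.succ_pos
  · have hk : (1 : ℝ) ≤ k + 1 := le_add_of_nonneg_left k.cast_nonneg
    exact rpow_mul_rpow_le_rpow_mul_sub_one_mul_rpow hω0 hω1 hk hc hcd hp hpq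

end Series

theorem stmt18_general (ω : ℝ) (hω : ω ∈ Set.Ioo (0:ℝ) 1)
    (a b : ℕ → ℝ) (ha : ∀ j, 0 < a j) (hamono : Monotone a)
    (b₀ : ℝ) (hb₀ : 0 < b₀) (hb : ∀ j, b₀ ≤ b j)
    (m : ℕ → ℕ)
    (mmax : ℕ) (hmmax : ∀ k, 1 ≤ k → m k ≤ mmax)
    (τ : ℝ) (hτ : 0 < τ) (s : ℕ) :
    ((mmax : ℝ≥0∞) * ∑' k : ℕ, ENNReal.ofReal (ω ^ (τ * a 0 * (((k : ℝ) + 1) ^ b₀ - 1))) < ⊤) ∧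
    (∏ j ∈ Finset.range s,
        ((m 0 : ℝ≥0∞) + (m 1 : ℝ≥0∞) * ENNReal.ofReal (ω ^ (τ * a j)))
      ≤ zetaSum ω a b m τ s) ∧
    (zetaSum ω a b m τ s
      = ∏ j ∈ Finset.range s,
          ((m 0 : ℝ≥0∞) + ∑' k : ℕ,
            (m (k + 1) : ℝ≥0∞) * ENNReal.ofReal (ω ^ (τ * a j * (((k : ℝ) + 1) ^ (b j)))))) ∧
    (zetaSum ω a b m τ s
      ≤ ∏ j ∈ Finset.range s,
          ((m 0 : ℝ≥0∞) +
            ((mmax : ℝ≥0∞) *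
              ∑' k : ℕ, ENNReal.ofReal (ω ^ (τ * a 0 * (((k : ℝ) + 1) ^ b₀ - 1)))) *
              ENNReal.ofReal (ω ^ (τ * a j)))) := by
  obtain ⟨hω0, hω1⟩ := hω
  have hfactor : zetaSum ω a b m τ s = ∏ j ∈ Finset.range s,
      ((m 0 : ℝ≥0∞) + ∑' k : ℕ,
        (m (k + 1) : ℝ≥0∞) * ENNReal.ofReal (ω ^ (τ * a j * (((k : ℝ) + 1) ^ (b j))))) := by
    let factor (j n : ℕ) : ℝ≥0∞ := m n * ENNReal.ofReal (ω ^ (τ * a j * (n : ℝ) ^ b j))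
    rw [zetaSum, ENNReal.tsum_pi_prod fun (j : Fin s) => factor j,
      Fin.prod_univ_eq_prod_range (fun j => ∑' n, factor j n)]
    exact Finset.prod_congr rfl fun j _ =>
      tsum_natCast_mul_ofReal_rpow_eq_add m (hb₀.trans_le (hb j)).ne'
  have hC := tsum_ofReal_rpow_mul_sub_one_ne_top hω0 hω1 (mul_pos hτ (ha 0)) hb₀
  refine ⟨ENNReal.mul_lt_top (ENNReal.natCast_lt_top mmax) hC.lt_top, ?_, hfactor, ?_⟩ <;>
    rw [hfactor] <;> gcongr with j
  · simpa using ENNReal.le_tsum (f := fun k : ℕ =>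
      (m (k + 1) : ℝ≥0∞) * ENNReal.ofReal (ω ^ (τ * a j * (((k : ℝ) + 1) ^ (b j))))) 0
  · exact tsum_natCast_mul_ofReal_rpow_le hω0 hω1.le (mul_pos hτ (ha 0)).le
      (mul_le_mul_of_nonneg_left (hamono j.zero_le) hτ.le) hb₀.le (hb j) hmmax

/-- Zeta-function product bound: for any `τ > 0`,
`∏_j (m_0 + m_1 ω^{τ a_j}) ≤ ∑_k λ_{s,k}^τ = ∏_j (m_0 + ∑_{k≥1} m_k ω^{τ a_j k^{b_j}})
≤ ∏_j (m_0 + C_τ ω^{τ a_j})` with `C_τ = m_max ∑_{k≥1} ω^{τ a_1 (k^{b₀}-1)} < ∞`. -/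
theorem stmt18 (ω : ℝ) (hω : ω ∈ Set.Ioo (0:ℝ) 1)
    (a b : ℕ → ℝ) (ha : ∀ j, 0 < a j) (hamono : Monotone a)
    (b₀ : ℝ) (hb₀ : 0 < b₀) (hb : ∀ j, b₀ ≤ b j)
    (m : ℕ → ℕ) (hm : ∀ k, 1 ≤ m k)
    (mmax : ℕ) (hmmax : ∀ k, 1 ≤ k → m k ≤ mmax) (hmmax' : ∃ k, 1 ≤ k ∧ m k = mmax)
    (τ : ℝ) (hτ : 0 < τ) (s : ℕ) :
    ((mmax : ℝ≥0∞) * ∑' k : ℕ, ENNReal.ofReal (ω ^ (τ * a 0 * (((k : ℝ) + 1) ^ b₀ - 1))) < ⊤) ∧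
    (∏ j ∈ Finset.range s,
        ((m 0 : ℝ≥0∞) + (m 1 : ℝ≥0∞) * ENNReal.ofReal (ω ^ (τ * a j)))
      ≤ zetaSum ω a b m τ s) ∧
    (zetaSum ω a b m τ s
      = ∏ j ∈ Finset.range s,
          ((m 0 : ℝ≥0∞) + ∑' k : ℕ,
            (m (k + 1) : ℝ≥0∞) * ENNReal.ofReal (ω ^ (τ * a j * (((k : ℝ) + 1) ^ (b j)))))) ∧
    (zetaSum ω a b m τ s
      ≤ ∏ j ∈ Finset.range s,
          ((m 0 : ℝ≥0∞) +
            ((mmax : ℝ≥0∞) *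
              ∑' k : ℕ, ENNReal.ofReal (ω ^ (τ * a 0 * (((k : ℝ) + 1) ^ b₀ - 1)))) *
              ENNReal.ofReal (ω ^ (τ * a j)))) :=
  stmt18_general ω hω a b ha hamono b₀ hb₀ hb m mmax hmmax τ hτ s
end
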